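/- arXiv:2502.10084 — 3 statements merged into one kernel-verified Lean document; each statement's English description precedes it below -/
import Mathlib

section
/- Let (Γ, μ) be a probability space, β ∈ (0,1), ε > 0, and let f, f_r, e : Γ → ℝ be measurable functions with e ≥ 0 and |f(ξ) − f_r(ξ)| ≤ e(ξ) for every ξ ∈ Γ. Set t̂ := VaR_β[f] and t̂^{r,e} := VaR_β[f_r − e]. Then the risk-region inclusion holds: {ξ ∈ Γ : f(ξ) ≥ t̂ − ε/2} ⊆ {ξ ∈ Γ : f_r(ξ) + e(ξ) ≥ t̂^{r,e} − ε/2}. -/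
open MeasureTheory

/-- Value-at-Risk of level `β` of a random variable `X` under `μ`. -/
noncomputable def VaR {Γ : Type*} [MeasurableSpace Γ] (μ : Measure Γ) (β : ℝ) (X : Γ → ℝ) : ℝ :=
  sInf {t : ℝ | β ≤ (μ {ξ | X ξ ≤ t}).toReal}

/-! Pointwise `f_r - e ≤ f ≤ f_r + e`. `VaR_β` is monotone once the sets under the `sInf` are
nonempty and bounded below, which continuity of `μ` along `{X ≤ t}` (as `t → ±∞`) guarantees for
`0 < β < 1`. Hence `VaR_β[f_r - e] - ε/2 ≤ VaR_β[f] - ε/2 ≤ f ξ ≤ f_r ξ + e ξ`. -/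

open Filter Set Topology

section VaR

variable {Γ : Type*}

theorem monotone_setOf_le (X : Γ → ℝ) : Monotone fun t => {ξ | X ξ ≤ t} :=
  fun _ _ hst _ hξ => le_trans hξ hst

variable [MeasurableSpace Γ] (μ : Measure Γ) {β : ℝ}

theorem tendsto_measure_setOf_le_atTop (X : Γ → ℝ) :
    Tendsto (fun t => μ {ξ | X ξ ≤ t}) atTop (𝓝 (μ univ)) := by
  have hunion : ⋃ t, {ξ | X ξ ≤ t} = univ :=
    eq_univ_of_forall fun ξ => mem_iUnion.2 ⟨X ξ, le_refl (X ξ)⟩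
  have hlim := tendsto_measure_iUnion_atTop (μ := μ) (monotone_setOf_le X)
  rwa [hunion] at hlim

theorem tendsto_measure_setOf_le_atBot [IsFiniteMeasure μ] {X : Γ → ℝ} (hX : AEMeasurable X μ) :
    Tendsto (fun t => μ {ξ | X ξ ≤ t}) atBot (𝓝 0) := by
  have hinter : ⋂ t, {ξ | X ξ ≤ t} = ∅ :=
    eq_empty_of_forall_notMem fun ξ hξ => by
      have h : X ξ ≤ X ξ - 1 := mem_iInter.1 hξ (X ξ - 1)
      linarith
  have hlim := tendsto_measure_iInter_atBot (s := fun t => {ξ | X ξ ≤ t})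
    (fun _ => hX.nullMeasurable measurableSet_Iic) (monotone_setOf_le X) ⟨0, measure_ne_top μ _⟩
  rwa [hinter, measure_empty] at hlim

theorem VaR_set_nonempty [IsProbabilityMeasure μ] (hβ : β < 1) (X : Γ → ℝ) :
    {t : ℝ | β ≤ (μ {ξ | X ξ ≤ t}).toReal}.Nonempty := by
  have hlim := (ENNReal.tendsto_toReal (measure_ne_top μ univ)).comp
    (tendsto_measure_setOf_le_atTop μ X)
  rw [measure_univ, ENNReal.toReal_one] at hlim
  obtain ⟨t, ht⟩ := (hlim.eventually (eventually_gt_nhds hβ)).exists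
  exact ⟨t, ht.le⟩

theorem VaR_set_bddBelow [IsFiniteMeasure μ] (hβ : 0 < β) {X : Γ → ℝ} (hX : AEMeasurable X μ) :
    BddBelow {t : ℝ | β ≤ (μ {ξ | X ξ ≤ t}).toReal} := by
  have hlim := (ENNReal.tendsto_toReal ENNReal.zero_ne_top).comp
    (tendsto_measure_setOf_le_atBot μ hX)
  rw [ENNReal.toReal_zero] at hlim
  obtain ⟨s, hs⟩ := (hlim.eventually (eventually_lt_nhds hβ)).exists_forall_of_atBot
  refine ⟨s, fun t ht => ?_⟩
  by_contra! hts
  exact (hs t hts.le).not_ge ht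

theorem VaR_mono [IsProbabilityMeasure μ] (hβ : β ∈ Ioo (0 : ℝ) 1) {X Y : Γ → ℝ}
    (hX : AEMeasurable X μ) (hXY : ∀ ξ, X ξ ≤ Y ξ) : VaR μ β X ≤ VaR μ β Y :=
  csInf_le_csInf (VaR_set_bddBelow μ hβ.1 hX) (VaR_set_nonempty μ hβ.2 Y) fun _ ht =>
    ht.trans <| ENNReal.toReal_mono (measure_ne_top μ _) <|
      measure_mono fun ξ hξ => (hXY ξ).trans hξ

end VaR

theorem risk_region_inclusion_general {Γ : Type*} [MeasurableSpace Γ] (μ : Measure Γ)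
    [IsProbabilityMeasure μ] (β ε : ℝ) (hβ : β ∈ Set.Ioo (0 : ℝ) 1)
    (f fr e : Γ → ℝ) (hfr : Measurable fr) (he : Measurable e)
    (herr : ∀ ξ, |f ξ - fr ξ| ≤ e ξ) :
    {ξ | VaR μ β f - ε / 2 ≤ f ξ} ⊆
      {ξ | VaR μ β (fun ξ => fr ξ - e ξ) - ε / 2 ≤ fr ξ + e ξ} := by
  intro ξ hξ
  have hbounds : ∀ ξ, fr ξ - e ξ ≤ f ξ ∧ f ξ ≤ fr ξ + e ξ := fun ξ => by
    constructor <;> linarith [abs_le.1 (herr ξ)]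
  calc VaR μ β (fun ξ => fr ξ - e ξ) - ε / 2
      ≤ VaR μ β f - ε / 2 := by
        gcongr
        exact VaR_mono μ hβ (hfr.sub he).aemeasurable fun ξ => (hbounds ξ).1
    _ ≤ f ξ := hξ
    _ ≤ fr ξ + e ξ := (hbounds ξ).2

/-- Risk-region inclusion (Proposition 1): if `|f - f_r| ≤ e` with `e ≥ 0`, then the
`ε`-smoothed risk region of `f` at level `VaR_β[f]` is contained in the ROM-based
region of `f_r + e` at level `VaR_β[f_r - e]`. -/
theorem risk_region_inclusion {Γ : Type*} [MeasurableSpace Γ] (μ : Measure Γ)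
    [IsProbabilityMeasure μ] (β ε : ℝ) (hβ : β ∈ Set.Ioo (0 : ℝ) 1) (hε : 0 < ε)
    (f fr e : Γ → ℝ) (hf : Measurable f) (hfr : Measurable fr) (he : Measurable e)
    (he0 : ∀ ξ, 0 ≤ e ξ) (herr : ∀ ξ, |f ξ - fr ξ| ≤ e ξ) :
    {ξ | VaR μ β f - ε / 2 ≤ f ξ} ⊆
      {ξ | VaR μ β (fun ξ => fr ξ - e ξ) - ε / 2 ≤ fr ξ + e ξ} :=
  risk_region_inclusion_general μ β ε hβ f fr e hfr he herr
end

section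
/- Let H be a real Hilbert space, (Γ, μ) a probability space, β ∈ (0,1), μ_f > 0 and δz ∈ H. Let p, w, q : Γ → ℝ and v : Γ → H be measurable with: p ≥ 0 μ-a.e. and ∫_Γ p dμ ≥ (1−β)/2; w ≥ 0 μ-a.e., w integrable with ∫_Γ w dμ > 0; q(ξ) ≥ μ_f ‖δz‖² for μ-a.e. ξ with p·q integrable; and ξ ↦ w(ξ)⟨v(ξ), δz⟩ and ξ ↦ w(ξ)⟨v(ξ), δz⟩² integrable. Then (1/(1−β)) [ ∫_Γ (p(ξ) q(ξ) + w(ξ) ⟨v(ξ), δz⟩²) dμ(ξ) − ( ∫_Γ w(ξ) ⟨v(ξ), δz⟩ dμ(ξ) )² / ∫_Γ w dμ ] ≥ (μ_f / 2) ‖δz‖². -/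
open MeasureTheory
open scoped RealInnerProductSpace

/-- Strong convexity of the reduced smoothed CVaR functional (Lemma 1, strong convexity
part): the quadratic form of the Schur complement of the Hessian of `F̃^ε` is bounded
below by `(μ_f/2)‖δz‖²`. -/
theorem schur_complement_strongly_convex
    {H : Type*} [NormedAddCommGroup H] [InnerProductSpace ℝ H] [CompleteSpace H]
    {Γ : Type*} [MeasurableSpace Γ] (μ : Measure Γ) [IsProbabilityMeasure μ]
    (β μf : ℝ) (hβ : β ∈ Set.Ioo (0 : ℝ) 1) (hμf : 0 < μf) (δz : H)
    (p w q : Γ → ℝ) (v : Γ → H)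
    (hp : Measurable p) (hw : Measurable w) (hq : Measurable q)
    (hv : StronglyMeasurable v)
    (hp0 : ∀ᵐ ξ ∂μ, 0 ≤ p ξ) (hpint : Integrable p μ)
    (hpmass : (1 - β) / 2 ≤ ∫ ξ, p ξ ∂μ)
    (hw0 : ∀ᵐ ξ ∂μ, 0 ≤ w ξ) (hwint : Integrable w μ)
    (hwpos : 0 < ∫ ξ, w ξ ∂μ)
    (hq0 : ∀ᵐ ξ ∂μ, μf * ‖δz‖ ^ 2 ≤ q ξ)
    (hpq : Integrable (fun ξ => p ξ * q ξ) μ)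
    (hwv : Integrable (fun ξ => w ξ * ⟪v ξ, δz⟫) μ)
    (hwv2 : Integrable (fun ξ => w ξ * ⟪v ξ, δz⟫ ^ 2) μ) :
    (μf / 2) * ‖δz‖ ^ 2 ≤
      (1 / (1 - β)) *
        ((∫ ξ, (p ξ * q ξ + w ξ * ⟪v ξ, δz⟫ ^ 2) ∂μ) -
          (∫ ξ, w ξ * ⟪v ξ, δz⟫ ∂μ) ^ 2 / ∫ ξ, w ξ ∂μ) := by
  obtain ⟨hβ0, hβ1⟩ := hβ
  have h1β : 0 < 1 - β := by linarith
  set x : Γ → ℝ := fun ξ => ⟪v ξ, δz⟫ with hx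
  set t : ℝ := (∫ ξ, w ξ * x ξ ∂μ) / ∫ ξ, w ξ ∂μ with ht
  -- Cauchy–Schwarz via ∫ w (x - t)² ≥ 0
  have hexp : ∀ ξ, w ξ * (x ξ - t) ^ 2
      = w ξ * x ξ ^ 2 - (2 * t) * (w ξ * x ξ) + t ^ 2 * w ξ := by
    intro ξ; ring
  have hint : Integrable (fun ξ => w ξ * (x ξ - t) ^ 2) μ := by
    simp only [hexp]
    exact (hwv2.sub (hwv.const_mul (2 * t))).add (hwint.const_mul (t ^ 2))
  have hnn : 0 ≤ ∫ ξ, w ξ * (x ξ - t) ^ 2 ∂μ := by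
    refine integral_nonneg_of_ae ?_
    filter_upwards [hw0] with ξ h using mul_nonneg h (sq_nonneg _)
  have hI1 : Integrable (fun ξ => w ξ * x ξ ^ 2 - 2 * t * (w ξ * x ξ)) μ :=
    hwv2.sub (hwv.const_mul (2 * t))
  have hI2 : Integrable (fun ξ => t ^ 2 * w ξ) μ := hwint.const_mul (t ^ 2)
  have hI3 : Integrable (fun ξ => 2 * t * (w ξ * x ξ)) μ := hwv.const_mul (2 * t)
  have hval : ∫ ξ, w ξ * (x ξ - t) ^ 2 ∂μ
      = (∫ ξ, w ξ * x ξ ^ 2 ∂μ) - (∫ ξ, w ξ * x ξ ∂μ) ^ 2 / ∫ ξ, w ξ ∂μ := by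
    simp only [hexp]
    rw [integral_add hI1 hI2, integral_sub hwv2 hI3, integral_const_mul, integral_const_mul]
    rw [ht]
    field_simp
    ring
  have hCS : (∫ ξ, w ξ * x ξ ∂μ) ^ 2 / ∫ ξ, w ξ ∂μ ≤ ∫ ξ, w ξ * x ξ ^ 2 ∂μ := by
    linarith [hval ▸ hnn]
  -- lower bound for ∫ p q
  have hpq_lb : μf * ‖δz‖ ^ 2 * ((1 - β) / 2) ≤ ∫ ξ, p ξ * q ξ ∂μ := by
    have h1 : μf * ‖δz‖ ^ 2 * ∫ ξ, p ξ ∂μ ≤ ∫ ξ, p ξ * q ξ ∂μ := by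
      rw [← integral_const_mul]
      refine integral_mono_ae (hpint.const_mul _) hpq ?_
      filter_upwards [hp0, hq0] with ξ h0 h1
      calc μf * ‖δz‖ ^ 2 * p ξ = p ξ * (μf * ‖δz‖ ^ 2) := by ring
        _ ≤ p ξ * q ξ := mul_le_mul_of_nonneg_left h1 h0
    have h2 : μf * ‖δz‖ ^ 2 * ((1 - β) / 2) ≤ μf * ‖δz‖ ^ 2 * ∫ ξ, p ξ ∂μ :=
      mul_le_mul_of_nonneg_left hpmass (by positivity)
    linarith
  rw [integral_add hpq hwv2]
  have key : μf * ‖δz‖ ^ 2 * ((1 - β) / 2)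
      ≤ (∫ ξ, p ξ * q ξ ∂μ) + ((∫ ξ, w ξ * x ξ ^ 2 ∂μ)
        - (∫ ξ, w ξ * x ξ ∂μ) ^ 2 / ∫ ξ, w ξ ∂μ) := by
    linarith
  have : μf / 2 * ‖δz‖ ^ 2 = (1 / (1 - β)) * (μf * ‖δz‖ ^ 2 * ((1 - β) / 2)) := by
    field_simp
  rw [this]
  have := mul_le_mul_of_nonneg_left key (le_of_lt (by positivity : (0:ℝ) < 1 / (1 - β)))
  linarith [this]
end

section
/- Let H be a real Hilbert space and F : H → ℝ differentiable with gradient ∇F satisfying: ⟨∇F(x) − ∇F(y), x − y⟩ ≥ μ‖x − y‖² for all x, y (μ-strong convexity) and ‖∇F(x) − ∇F(y)‖ ≤ L‖x − y‖ for all x, y, with 0 < μ ≤ L. Let z* ∈ H satisfy ∇F(z*) = 0. Let (Ω, 𝔉, P) be a probability space, 𝒢 ⊆ 𝔉 a sub-σ-algebra, z : Ω → H a 𝒢-measurable square-integrable random variable, and g : Ω → H a square-integrable random variable satisfying the norm condition E[‖g − ∇F(z)‖² | 𝒢] ≤ θ² ‖∇F(z)‖² P-a.s., with θ ≥ 0.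 Then for any step size α ∈ (0, 2/(μ + L)], P-almost surely: E[ ‖z − α g − z*‖² | 𝒢 ] ≤ (1 − αμ + αθL)² ‖z − z*‖². -/
/-!
For a `μ`-strongly convex `F` with `L`-Lipschitz gradient, Baillon–Haddad cocoercivity of the
gradient of the convex function `F - μ/2 ‖·‖²` yields the interpolation inequality
`μL ‖x - y‖² + ‖∇F x - ∇F y‖² ≤ (μ + L) ⟪∇F x - ∇F y, x - y⟫`, which makes the exact step
`x ↦ x - α ∇F x` a `(1 - αμ)`-contraction when `α ≤ 2 / (μ + L)`. The sampled step is the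
`𝒢`-measurable exact step `d` minus the error `e = α (g - ∇F z)`, whose conditional second moment
is at most `(αθL ‖z - z*‖)²` by the norm test. Young's inequality with rational weights, optimised
after conditioning, gives the conditional Minkowski inequality
`√E[‖d - e‖² | 𝒢] ≤ ‖d‖ + √E[‖e‖² | 𝒢]`, which adds the two bounds.
-/

open MeasureTheory
open scoped RealInnerProductSpace

section Gradient

variable {H : Type*} [NormedAddCommGroup H] [InnerProductSpace ℝ H] [CompleteSpace H]
  {f : H → ℝ} {f' : H → H}

theorem HasGradientAt.sub {g : H → ℝ} {x f₀ g₀ : H} (hf : HasGradientAt f f₀ x)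
    (hg : HasGradientAt g g₀ x) : HasGradientAt (fun w => f w - g w) (f₀ - g₀) x := by
  rw [hasGradientAt_iff_hasFDerivAt, map_sub]
  exact hf.hasFDerivAt.sub hg.hasFDerivAt

theorem HasGradientAt.neg {x f₀ : H} (hf : HasGradientAt f f₀ x) :
    HasGradientAt (fun w => -f w) (-f₀) x := by
  rw [hasGradientAt_iff_hasFDerivAt, map_neg]
  exact hf.hasFDerivAt.neg

theorem hasGradientAt_inner_const (a x : H) : HasGradientAt (fun w => ⟪a, w⟫) a x :=
  (InnerProductSpace.toDual ℝ H a).hasFDerivAt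

theorem hasGradientAt_mul_norm_sq (c : ℝ) (x : H) :
    HasGradientAt (fun w => c / 2 * ‖w‖ ^ 2) (c • x) x := by
  rw [hasGradientAt_iff_hasFDerivAt]
  refine ((hasStrictFDerivAt_norm_sq x).hasFDerivAt.const_mul (c / 2)).congr_fderiv ?_
  ext u
  simp only [smul_apply, coe_innerSL_apply, nsmul_eq_mul, smul_eq_mul, map_smul,
    InnerProductSpace.toDual_apply_apply]
  ring

theorem hasDerivAt_comp_add_smul (hf : ∀ x, HasGradientAt f (f' x) x) (x v : H) (t : ℝ) :
    HasDerivAt (fun s : ℝ => f (x + s • v)) ⟪f' (x + t • v), v⟫ t := by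
  have hline : HasDerivAt (fun s : ℝ => x + s • v) v t := by
    simpa using ((hasDerivAt_id t).smul_const v).const_add x
  exact (hf _).hasFDerivAt.comp_hasDerivAt t hline

theorem add_inner_gradient_add_le (hf : ∀ x, HasGradientAt f (f' x) x) (m : ℝ)
    (hm : ∀ x y, m * ‖x - y‖ ^ 2 ≤ ⟪f' x - f' y, x - y⟫) (x y : H) :
    f x + ⟪f' x, y - x⟫ + m / 2 * ‖y - x‖ ^ 2 ≤ f y := by
  set v := y - x
  let ψ : ℝ → ℝ := fun s => f (x + s • v) - s * ⟪f' x, v⟫ - m / 2 * s ^ 2 * ‖v‖ ^ 2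
  have hψ (t : ℝ) :
      HasDerivAt ψ (⟪f' (x + t • v), v⟫ - ⟪f' x, v⟫ - m * t * ‖v‖ ^ 2) t := by
    have hsq := ((hasDerivAt_pow 2 t).const_mul (m / 2)).mul_const (‖v‖ ^ 2)
    exact (((hasDerivAt_comp_add_smul hf x v t).sub (hasDerivAt_mul_const _)).sub
      hsq).congr_deriv (by ring)
  have hmono : MonotoneOn ψ (Set.Icc 0 1) := by
    refine monotoneOn_of_hasDerivWithinAt_nonneg (convex_Icc 0 1)
      (fun t _ => (hψ t).continuousAt.continuousWithinAt)
      (fun t _ => (hψ t).hasDerivWithinAt) fun t ht => ?_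
    rw [interior_Icc] at ht
    have h := hm (x + t • v) x
    rw [add_sub_cancel_left, real_inner_smul_right, norm_smul, Real.norm_eq_abs,
      abs_of_pos ht.1, inner_sub_left] at h
    nlinarith [ht.1]
  have h01 := hmono (by simp) (by simp) zero_le_one
  simp only [ψ, zero_smul, add_zero, zero_mul, sub_zero, one_smul, one_mul, one_pow,
    zero_pow two_ne_zero, mul_zero, v, add_sub_cancel] at h01
  linarith

theorem le_add_inner_gradient_add (hf : ∀ x, HasGradientAt f (f' x) x) (K : ℝ)
    (hK : ∀ x y, ⟪f' x - f' y, x - y⟫ ≤ K * ‖x - y‖ ^ 2) (x y : H) :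
    f y ≤ f x + ⟪f' x, y - x⟫ + K / 2 * ‖y - x‖ ^ 2 := by
  have h := add_inner_gradient_add_le (fun x => (hf x).neg) (-K) (fun x y => by
    rw [neg_sub_neg, ← neg_sub, inner_neg_right, norm_neg, neg_mul, neg_le_neg_iff]
    exact hK y x) x y
  rw [inner_neg_left] at h
  linarith

theorem add_inner_gradient_add_norm_sq_gradient_sub_le (hf : ∀ x, HasGradientAt f (f' x) x)
    (hmono : ∀ x y, 0 ≤ ⟪f' x - f' y, x - y⟫) {K : ℝ} (hK : 0 < K)
    (hsmooth : ∀ x y, ⟪f' x - f' y, x - y⟫ ≤ K * ‖x - y‖ ^ 2) (a b : H) :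
    f a + ⟪f' a, b - a⟫ + ‖f' b - f' a‖ ^ 2 / (2 * K) ≤ f b := by
  set h : H → ℝ := fun w => f w - ⟪f' a, w⟫
  have hh (w : H) : HasGradientAt h (f' w - f' a) w := (hf w).sub (hasGradientAt_inner_const _ _)
  have hdiff (u w : H) : (f' u - f' a) - (f' w - f' a) = f' u - f' w := sub_sub_sub_cancel_right ..
  have hmin : h a ≤ h (b - K⁻¹ • (f' b - f' a)) := by
    simpa [hdiff] using add_inner_gradient_add_le hh 0 (by simpa [hdiff] using hmono) a
      (b - K⁻¹ • (f' b - f' a))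
  have hdesc := le_add_inner_gradient_add hh K (by simpa [hdiff] using hsmooth) b
    (b - K⁻¹ • (f' b - f' a))
  simp only [h, sub_sub_cancel_left, inner_neg_right, real_inner_smul_right, norm_neg, norm_smul,
    real_inner_self_eq_norm_sq, Real.norm_eq_abs, abs_of_pos (inv_pos.2 hK), mul_pow] at hmin hdesc
  rw [inner_sub_right]
  have hK' : K⁻¹ * ‖f' b - f' a‖ ^ 2 - K / 2 * (K⁻¹ ^ 2 * ‖f' b - f' a‖ ^ 2)
      = ‖f' b - f' a‖ ^ 2 / (2 * K) := by
    field_simp; ring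
  linarith

theorem norm_sq_gradient_sub_le_mul_inner (hf : ∀ x, HasGradientAt f (f' x) x)
    (hmono : ∀ x y, 0 ≤ ⟪f' x - f' y, x - y⟫) {K : ℝ} (hK : 0 < K)
    (hsmooth : ∀ x y, ⟪f' x - f' y, x - y⟫ ≤ K * ‖x - y‖ ^ 2) (x y : H) :
    ‖f' x - f' y‖ ^ 2 ≤ K * ⟪f' x - f' y, x - y⟫ := by
  have hxy := add_inner_gradient_add_norm_sq_gradient_sub_le hf hmono hK hsmooth x y
  have hyx := add_inner_gradient_add_norm_sq_gradient_sub_le hf hmono hK hsmooth y x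
  rw [norm_sub_rev] at hxy
  have hhalf : ‖f' x - f' y‖ ^ 2 / K
      = ‖f' x - f' y‖ ^ 2 / (2 * K) + ‖f' x - f' y‖ ^ 2 / (2 * K) := by
    field_simp; ring
  have hinner : ⟪f' x - f' y, x - y⟫ = -(⟪f' x, y - x⟫ + ⟪f' y, x - y⟫) := by
    rw [inner_sub_left, inner_sub_right, inner_sub_right, inner_sub_right]; ring
  rw [← div_le_iff₀' hK, hhalf, hinner]
  linarith

theorem mul_norm_sq_add_norm_sq_gradient_sub_le (hf : ∀ x, HasGradientAt f (f' x) x)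
    {μ L : ℝ} (hμL : μ ≤ L)
    (hsc : ∀ x y, μ * ‖x - y‖ ^ 2 ≤ ⟪f' x - f' y, x - y⟫)
    (hlip : ∀ x y, ‖f' x - f' y‖ ≤ L * ‖x - y‖) (x y : H) :
    μ * L * ‖x - y‖ ^ 2 + ‖f' x - f' y‖ ^ 2 ≤ (μ + L) * ⟪f' x - f' y, x - y⟫ := by
  have hcs (u w : H) : ⟪f' u - f' w, u - w⟫ ≤ L * ‖u - w‖ ^ 2 := by
    nlinarith [real_inner_le_norm (f' u - f' w) (u - w), hlip u w, norm_nonneg (u - w)]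
  rcases hμL.eq_or_lt with rfl | hlt
  · rw [le_antisymm (hcs x y) (hsc x y)]
    nlinarith [pow_le_pow_left₀ (norm_nonneg _) (hlip x y) 2]
  · -- cocoercivity of the gradient of the convex, `(L - μ)`-smooth function `f - μ/2 ‖·‖²`
    have hG (w : H) : HasGradientAt (fun w => f w - μ / 2 * ‖w‖ ^ 2) (f' w - μ • w) w :=
      (hf w).sub (hasGradientAt_mul_norm_sq μ w)
    have hdiff (u w : H) :
        (f' u - μ • u) - (f' w - μ • w) = (f' u - f' w) - μ • (u - w) := by
      rw [smul_sub]; abel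
    have hinner (u w : H) : ⟪(f' u - μ • u) - (f' w - μ • w), u - w⟫
        = ⟪f' u - f' w, u - w⟫ - μ * ‖u - w‖ ^ 2 := by
      rw [hdiff, inner_sub_left, real_inner_smul_left, real_inner_self_eq_norm_sq]
    have hco := norm_sq_gradient_sub_le_mul_inner hG
      (fun u w => by linarith [hinner u w, hsc u w])
      (sub_pos.2 hlt) (fun u w => by linarith [hinner u w, hcs u w]) x y
    rw [hinner, hdiff, norm_sub_sq_real, real_inner_smul_right, norm_smul, Real.norm_eq_abs,
      mul_pow, sq_abs] at hco
    nlinarith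

theorem norm_sub_smul_gradient_sub_le (hf : ∀ x, HasGradientAt f (f' x) x)
    {μ L α : ℝ} (hμ : 0 < μ) (hμL : μ ≤ L)
    (hsc : ∀ x y, μ * ‖x - y‖ ^ 2 ≤ ⟪f' x - f' y, x - y⟫)
    (hlip : ∀ x y, ‖f' x - f' y‖ ≤ L * ‖x - y‖)
    (hα₀ : 0 ≤ α) (hα : α ≤ 2 / (μ + L))
    (x y : H) :
    ‖(x - α • f' x) - (y - α • f' y)‖ ≤ (1 - α * μ) * ‖x - y‖ := by
  have hα' : α * (μ + L) ≤ 2 := (le_div_iff₀ (by linarith)).1 hα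
  have hαμ : 0 ≤ 1 - α * μ := by nlinarith
  have hrw : (x - α • f' x) - (y - α • f' y) = (x - y) - α • (f' x - f' y) := by
    rw [smul_sub]; abel
  refine le_of_sq_le_sq ?_ (mul_nonneg hαμ (norm_nonneg _))
  rw [hrw, norm_sub_sq_real, real_inner_smul_right, norm_smul, Real.norm_eq_abs, mul_pow, sq_abs,
    real_inner_comm]
  have hinterp := mul_norm_sq_add_norm_sq_gradient_sub_le hf hμL hsc hlip x y
  have hsc' := hsc x y
  have hcs := real_inner_le_norm (f' x - f' y) (x - y)
  have hlow : μ * ‖x - y‖ ≤ ‖f' x - f' y‖ := by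
    rcases (norm_nonneg (x - y)).eq_or_lt with h0 | h0
    · rw [← h0, mul_zero]; exact norm_nonneg _
    · exact le_of_mul_le_mul_right (by nlinarith) h0
  -- the step `α ≤ 2 / (μ + L)` makes the coefficient of `‖f' x - f' y‖²` nonpositive
  have hfact : 0 ≤ α * (2 - α * (μ + L)) * (‖f' x - f' y‖ ^ 2 - (μ * ‖x - y‖) ^ 2) :=
    mul_nonneg (mul_nonneg hα₀ (by linarith)) (by nlinarith [norm_nonneg (x - y)])
  nlinarith [mul_le_mul_of_nonneg_left hinterp (mul_nonneg hα₀ hα₀)]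

end Gradient

open Filter Topology in
theorem le_add_sq_of_forall_rat {X c a : ℝ} (hc : 0 ≤ c) (ha : 0 ≤ a)
    (h : ∀ t : ℚ, 0 < t → X ≤ (1 + t) * c ^ 2 + (1 + (t : ℝ)⁻¹) * a ^ 2) :
    X ≤ (c + a) ^ 2 := by
  -- perturbing `c` and `a` by `η > 0` makes the optimal weight `(a + η) / (c + η)` positive
  have key (η : ℝ) (hη : 0 < η) : X ≤ (c + a + 2 * η) ^ 2 + η * (c + η) ^ 2 := by
    set s := (a + η) / (c + η)
    have hs : 0 < s := by positivity
    have hsc : s * (c + η) = a + η := div_mul_cancel₀ _ (by positivity)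
    obtain ⟨t, hst, hts⟩ := exists_rat_btwn (lt_add_of_pos_right s hη)
    have ht : (0 : ℝ) < t := hs.trans hst
    have hc' : (1 + t) * c ^ 2 ≤ (c + η) ^ 2 + (a + η) * (c + η) + η * (c + η) ^ 2 := by
      have : c ^ 2 ≤ (c + η) ^ 2 := pow_le_pow_left₀ hc (by linarith) 2
      nlinarith
    have ha' : (1 + (t : ℝ)⁻¹) * a ^ 2 ≤ (a + η) ^ 2 + (a + η) * (c + η) := by
      have h1 : a ^ 2 ≤ (a + η) ^ 2 := pow_le_pow_left₀ ha (by linarith) 2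
      have h2 : (t : ℝ)⁻¹ * (a + η) ^ 2 ≤ s⁻¹ * (a + η) ^ 2 := by gcongr
      have h3 : s⁻¹ * (a + η) ^ 2 = (a + η) * (c + η) := by
        rw [← hsc]; field_simp
      nlinarith [inv_pos.2 ht]
    calc X ≤ (1 + t) * c ^ 2 + (1 + (t : ℝ)⁻¹) * a ^ 2 := h t (by exact_mod_cast ht)
      _ ≤ _ := add_le_add hc' ha'
      _ = _ := by ring
  have hlim : Tendsto (fun η : ℝ => (c + a + 2 * η) ^ 2 + η * (c + η) ^ 2) (𝓝[>] 0)
      (𝓝 ((c + a) ^ 2)) := by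
    have hcont : Continuous (fun η : ℝ => (c + a + 2 * η) ^ 2 + η * (c + η) ^ 2) := by
      fun_prop
    simpa using (hcont.tendsto 0).mono_left nhdsWithin_le_nhds
  exact ge_of_tendsto hlim (eventually_nhdsWithin_of_forall key)

theorem norm_sub_sq_le_add_mul {E : Type*} [SeminormedAddCommGroup E] (u v : E) {t : ℝ}
    (ht : 0 < t) : ‖u - v‖ ^ 2 ≤ (1 + t) * ‖u‖ ^ 2 + (1 + t⁻¹) * ‖v‖ ^ 2 := by
  have hyoung :
      t * ‖u‖ ^ 2 + t⁻¹ * ‖v‖ ^ 2 - 2 * (‖u‖ * ‖v‖) = t⁻¹ * (t * ‖u‖ - ‖v‖) ^ 2 := by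
    field_simp; ring
  have : 0 ≤ t⁻¹ * (t * ‖u‖ - ‖v‖) ^ 2 := by positivity
  nlinarith [pow_le_pow_left₀ (norm_nonneg _) (norm_sub_le u v) 2]

section ConditionalExpectation

variable {Ω E : Type*} [NormedAddCommGroup E] {m m0 : MeasurableSpace Ω} {P : Measure Ω}
  [IsFiniteMeasure P] {d e : Ω → E}

theorem ae_condExp_norm_sub_sq_le_add_mul (hm : m ≤ m0) (hd : StronglyMeasurable[m] d)
    (hd2 : MemLp d 2 P) (he2 : MemLp e 2 P) {t : ℝ} (ht : 0 < t) :
    ∀ᵐ ω ∂P, P[fun ω => ‖d ω - e ω‖ ^ 2|m] ω ≤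
      (1 + t) * ‖d ω‖ ^ 2 + (1 + t⁻¹) * P[fun ω => ‖e ω‖ ^ 2|m] ω := by
  have hD := (hd2.integrable_norm_pow two_ne_zero).const_mul (1 + t)
  have hE := he2.integrable_norm_pow two_ne_zero
  have hmono := condExp_mono (m := m) ((hd2.sub he2).integrable_norm_pow two_ne_zero)
    (hD.add (hE.const_mul (1 + t⁻¹)))
    (ae_of_all _ fun ω => norm_sub_sq_le_add_mul (d ω) (e ω) ht)
  have hpull : P[fun ω => (1 + t) * ‖d ω‖ ^ 2|m] = fun ω => (1 + t) * ‖d ω‖ ^ 2 :=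
    condExp_of_stronglyMeasurable hm ((hd.norm.pow 2).const_mul _) hD
  filter_upwards [hmono, condExp_add hD (hE.const_mul (1 + t⁻¹)) m,
    condExp_smul (μ := P) (1 + t⁻¹) (fun ω => ‖e ω‖ ^ 2) m] with ω hω hadd hsmul
  refine hω.trans_eq ?_
  rw [hadd, Pi.add_apply, hpull]
  exact congrArg _ hsmul

theorem ae_condExp_norm_sub_sq_le (hm : m ≤ m0) (hd : StronglyMeasurable[m] d)
    (hd2 : MemLp d 2 P) (he2 : MemLp e 2 P) :
    ∀ᵐ ω ∂P,
      P[fun ω => ‖d ω - e ω‖ ^ 2|m] ω ≤ (‖d ω‖ + √(P[fun ω => ‖e ω‖ ^ 2|m] ω)) ^ 2 := by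
  have hyoung : ∀ᵐ ω ∂P, ∀ t : ℚ, 0 < t → P[fun ω => ‖d ω - e ω‖ ^ 2|m] ω ≤
      (1 + t) * ‖d ω‖ ^ 2 + (1 + (t : ℝ)⁻¹) * P[fun ω => ‖e ω‖ ^ 2|m] ω := by
    rw [ae_all_iff]
    intro t
    rcases lt_or_ge 0 t with ht | ht
    · filter_upwards [ae_condExp_norm_sub_sq_le_add_mul hm hd hd2 he2 (Rat.cast_pos.2 ht)]
        with ω h _ using h
    · exact ae_of_all _ fun ω h => absurd h ht.not_gt
  filter_upwards [hyoung,
    condExp_nonneg (m := m) (f := fun ω => ‖e ω‖ ^ 2) (ae_of_all P fun ω => by positivity)]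
    with ω h hnn
  refine le_add_sq_of_forall_rat (norm_nonneg _) (Real.sqrt_nonneg _) fun t ht => ?_
  rw [Real.sq_sqrt hnn]
  exact h t ht

theorem ae_condExp_norm_sub_smul_sub_sq_le [NormedSpace ℝ E] (hm : m ≤ m0) {G : E → E}
    (hG : Continuous G) {x₀ : E} {ρ L α θ : ℝ} (hα : 0 ≤ α) (hθ : 0 ≤ θ)
    (hstep : ∀ x, ‖x - α • G x - x₀‖ ≤ ρ * ‖x - x₀‖) (hGle : ∀ x, ‖G x‖ ≤ L * ‖x - x₀‖)
    {z g : Ω → E} (hz : StronglyMeasurable[m] z) (hz2 : MemLp z 2 P) (hg2 : MemLp g 2 P)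
    (hnorm : ∀ᵐ ω ∂P, P[fun ω => ‖g ω - G (z ω)‖ ^ 2|m] ω ≤ θ ^ 2 * ‖G (z ω)‖ ^ 2) :
    ∀ᵐ ω ∂P,
      P[fun ω => ‖z ω - α • g ω - x₀‖ ^ 2|m] ω ≤ (ρ + α * θ * L) ^ 2 * ‖z ω - x₀‖ ^ 2 := by
  have hGz2 : MemLp (fun ω => G (z ω)) 2 P :=
    (hz2.sub (memLp_const x₀)).of_le_mul (hG.comp_aestronglyMeasurable hz2.1)
      (ae_of_all _ fun ω => (hGle (z ω)).trans (mul_le_mul_of_nonneg_right (le_abs_self L)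
        (norm_nonneg _)))
  set d : Ω → E := fun ω => z ω - α • G (z ω) - x₀
  set e : Ω → E := fun ω => α • (g ω - G (z ω))
  have hde : (fun ω => ‖z ω - α • g ω - x₀‖ ^ 2) = fun ω => ‖d ω - e ω‖ ^ 2 := by
    ext ω; congr 2; simp only [d, e, smul_sub]; abel
  have hd : StronglyMeasurable[m] d :=
    (hz.sub ((hG.comp_stronglyMeasurable hz).const_smul α)).sub stronglyMeasurable_const
  have hd2 : MemLp d 2 P := (hz2.sub (hGz2.const_smul α)).sub (memLp_const x₀)
  have he2 : MemLp e 2 P := (hg2.sub hGz2).const_smul α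
  have hE : P[fun ω => ‖e ω‖ ^ 2|m] =ᵐ[P] α ^ 2 • P[fun ω => ‖g ω - G (z ω)‖ ^ 2|m] := by
    have : (fun ω => ‖e ω‖ ^ 2) = α ^ 2 • fun ω => ‖g ω - G (z ω)‖ ^ 2 := by
      ext ω; simp [e, norm_smul, mul_pow]
    rw [this]; exact condExp_smul _ _ _
  filter_upwards [ae_condExp_norm_sub_sq_le hm hd hd2 he2, hE, hnorm] with ω hsplit hEω hnω
  have herror : √(P[fun ω => ‖e ω‖ ^ 2|m] ω) ≤ α * θ * L * ‖z ω - x₀‖ := by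
    rw [hEω, Pi.smul_apply, smul_eq_mul]
    calc √(α ^ 2 * P[fun ω => ‖g ω - G (z ω)‖ ^ 2|m] ω)
        ≤ √((α * θ * ‖G (z ω)‖) ^ 2) := by
          gcongr; linarith [mul_le_mul_of_nonneg_left hnω (sq_nonneg α)]
      _ = α * θ * ‖G (z ω)‖ := Real.sqrt_sq (by positivity)
      _ ≤ α * θ * (L * ‖z ω - x₀‖) := by gcongr; exact hGle _
      _ = _ := by ring
  rw [hde]
  calc _ ≤ _ := hsplit
    _ ≤ (ρ * ‖z ω - x₀‖ + α * θ * L * ‖z ω - x₀‖) ^ 2 :=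
        pow_le_pow_left₀ (by positivity) (add_le_add (hstep _) herror) 2
    _ = _ := by ring

end ConditionalExpectation

theorem one_step_contraction_general
    {H : Type*} [NormedAddCommGroup H] [InnerProductSpace ℝ H] [CompleteSpace H]
    (F : H → ℝ) (Fgrad : H → H) (hF : ∀ x, HasGradientAt F (Fgrad x) x)
    (μc L : ℝ) (hμc : 0 < μc) (hμL : μc ≤ L)
    (hsc : ∀ x y : H, μc * ‖x - y‖ ^ 2 ≤ ⟪Fgrad x - Fgrad y, x - y⟫)
    (hlip : ∀ x y : H, ‖Fgrad x - Fgrad y‖ ≤ L * ‖x - y‖)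
    (zstar : H) (hzstar : Fgrad zstar = 0)
    {Ω : Type*} {m0 : MeasurableSpace Ω} (P : Measure Ω) [IsProbabilityMeasure P]
    (𝒢 : MeasurableSpace Ω) (h𝒢 : 𝒢 ≤ m0)
    (z g : Ω → H) (hz : StronglyMeasurable[𝒢] z)
    (hz2 : MemLp z 2 P) (hg2 : MemLp g 2 P)
    (θ : ℝ) (hθ : 0 ≤ θ)
    (hnorm : ∀ᵐ ω ∂P,
      (P[fun ω' => ‖g ω' - Fgrad (z ω')‖ ^ 2|𝒢]) ω ≤ θ ^ 2 * ‖Fgrad (z ω)‖ ^ 2)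
    (α : ℝ) (hα : α ∈ Set.Ioc (0 : ℝ) (2 / (μc + L))) :
    ∀ᵐ ω ∂P,
      (P[fun ω' => ‖z ω' - α • g ω' - zstar‖ ^ 2|𝒢]) ω ≤
        (1 - α * μc + α * θ * L) ^ 2 * ‖z ω - zstar‖ ^ 2 := by
  obtain ⟨hα₀, hα⟩ := hα
  have hcont : Continuous Fgrad :=
    (LipschitzWith.of_dist_le_mul (K := L.toNNReal) fun x y => by
      simpa [dist_eq_norm, Real.coe_toNNReal L (hμc.le.trans hμL)] using hlip x y).continuous
  refine ae_condExp_norm_sub_smul_sub_sq_le h𝒢 hcont hα₀.le hθ (fun x => ?_) (fun x => ?_)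
    hz hz2 hg2 hnorm
  · simpa [hzstar] using norm_sub_smul_gradient_sub_le hF hμc hμL hsc hlip hα₀.le hα x zstar
  · simpa [hzstar] using hlip x zstar

/-- One-step contraction estimate for the inexact (sampled) gradient step under the
conditional norm-test condition. -/
theorem one_step_contraction
    {H : Type*} [NormedAddCommGroup H] [InnerProductSpace ℝ H] [CompleteSpace H]
    [MeasurableSpace H] [BorelSpace H]
    (F : H → ℝ) (Fgrad : H → H) (hF : ∀ x, HasGradientAt F (Fgrad x) x)
    (μc L : ℝ) (hμc : 0 < μc) (hμL : μc ≤ L)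
    (hsc : ∀ x y : H, μc * ‖x - y‖ ^ 2 ≤ ⟪Fgrad x - Fgrad y, x - y⟫)
    (hlip : ∀ x y : H, ‖Fgrad x - Fgrad y‖ ≤ L * ‖x - y‖)
    (zstar : H) (hzstar : Fgrad zstar = 0)
    {Ω : Type*} {m0 : MeasurableSpace Ω} (P : Measure Ω) [IsProbabilityMeasure P]
    (𝒢 : MeasurableSpace Ω) (h𝒢 : 𝒢 ≤ m0)
    (z g : Ω → H) (hz : StronglyMeasurable[𝒢] z)
    (hz2 : MemLp z 2 P) (hg2 : MemLp g 2 P)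
    (θ : ℝ) (hθ : 0 ≤ θ)
    (hnorm : ∀ᵐ ω ∂P,
      (P[fun ω' => ‖g ω' - Fgrad (z ω')‖ ^ 2|𝒢]) ω ≤ θ ^ 2 * ‖Fgrad (z ω)‖ ^ 2)
    (α : ℝ) (hα : α ∈ Set.Ioc (0 : ℝ) (2 / (μc + L))) :
    ∀ᵐ ω ∂P,
      (P[fun ω' => ‖z ω' - α • g ω' - zstar‖ ^ 2|𝒢]) ω ≤
        (1 - α * μc + α * θ * L) ^ 2 * ‖z ω - zstar‖ ^ 2 :=
  one_step_contraction_general F Fgrad hF μc L hμc hμL hsc hlip zstar hzstar P 𝒢 h𝒢 z g hz hz2 hg2 θ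
    hθ hnorm α hα
end
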